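/- arXiv:2006.05761 — 2 statements merged into one kernel-verified Lean document; each statement's English description precedes it below -/
import Mathlib

section
/- For a spherical pseudo-differential operator D with trivial nullspace and spectral growth order p > (d-1)/2, every square-integrable function f ∈ L²(S^{d-1}) satisfies D^{-1}f ∈ C(S^{d-1}); i.e. the series Σ_n (1/D̂_n) Σ_m f̂_n^m Y_n^m converges uniformly on S^{d-1} to a continuous function. -/
/-!
By Cauchy–Schwarz and the addition theorem, the `n`-th block of the series is bounded on the
sphere by `√(Σ_m |f̂_n^m|²) · √(N_d(n) / (a_d D̂_n²))`. Both radicands are summable in `n`: the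
first since `f ∈ L²`, the second since `N_d(n) / D̂_n² = O(n^{d-2-2p})` and `d - 2 - 2p < -1`.
As `√(ab) ≤ (a + b)/2`, the bounds are summable, and the Weierstrass M-test gives uniform
convergence to a continuous limit.
-/

open Filter

theorem norm_sum_mul_le_sqrt_mul_sqrt {ι R : Type*} [SeminormedRing R] (s : Finset ι)
    (a y : ι → R) :
    ‖∑ i ∈ s, a i * y i‖ ≤ √(∑ i ∈ s, ‖a i‖ ^ 2) * √(∑ i ∈ s, ‖y i‖ ^ 2) :=
  calc ‖∑ i ∈ s, a i * y i‖ ≤ ∑ i ∈ s, ‖a i‖ * ‖y i‖ :=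
        norm_sum_le_of_le s fun _ _ => norm_mul_le _ _
    _ ≤ _ := Real.sum_mul_le_sqrt_mul_sqrt s _ _

theorem Summable.sqrt_mul_sqrt {A B : ℕ → ℝ} (hA : Summable A) (hB : Summable B)
    (hA0 : ∀ n, 0 ≤ A n) (hB0 : ∀ n, 0 ≤ B n) :
    Summable fun n => √(A n) * √(B n) := by
  refine ((hA.add hB).div_const 2).of_nonneg_of_le (fun n => by positivity) fun n => ?_
  nlinarith [sq_nonneg (√(A n) - √(B n)), Real.sq_sqrt (hA0 n), Real.sq_sqrt (hB0 n)]

theorem summable_div_sq_of_le_rpow_of_rpow_le_abs {M D : ℕ → ℝ} {q p C C₁ : ℝ}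
    (hqp : q - 2 * p < -1) (hC₁ : 0 < C₁)
    (hM : ∀ᶠ n : ℕ in atTop, 0 ≤ M n ∧ M n ≤ C * (n : ℝ) ^ q)
    (hD : ∀ᶠ n : ℕ in atTop, C₁ * (n : ℝ) ^ p ≤ |D n|) :
    Summable fun n => M n / D n ^ 2 := by
  refine .of_norm_bounded_eventually_nat ((Real.summable_nat_rpow.mpr hqp).mul_left (C / C₁ ^ 2)) ?_
  filter_upwards [hM, hD, eventually_ge_atTop 1] with n ⟨hM0, hMle⟩ hDge hn
  have hn0 : (0 : ℝ) < n := by exact_mod_cast hn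
  have hlow : 0 < C₁ * (n : ℝ) ^ p := by positivity
  have hDsq : (C₁ * (n : ℝ) ^ p) ^ 2 ≤ D n ^ 2 := by
    rw [← sq_abs (D n)]
    exact pow_le_pow_left₀ hlow.le hDge 2
  have hrpow : (n : ℝ) ^ (q - 2 * p) = (n : ℝ) ^ q / ((n : ℝ) ^ p) ^ 2 := by
    rw [Real.rpow_sub hn0, ← Real.rpow_mul_natCast hn0.le, mul_comm]
    norm_num
  calc ‖M n / D n ^ 2‖ = M n / D n ^ 2 := Real.norm_of_nonneg (by positivity)
    _ ≤ C * (n : ℝ) ^ q / (C₁ * (n : ℝ) ^ p) ^ 2 :=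
      div_le_div₀ (hM0.trans hMle) hMle (by positivity) hDsq
    _ = C / C₁ ^ 2 * (n : ℝ) ^ (q - 2 * p) := by
      rw [hrpow]
      ring

theorem norm_ofReal_inv_mul_sum_mul_le {ι : Type*} (s : Finset ι) (D : ℝ) (a y : ι → ℂ)
    {K : ℝ} (hy : ∑ i ∈ s, ‖y i‖ ^ 2 = K) :
    ‖(D : ℂ)⁻¹ * ∑ i ∈ s, a i * y i‖ ≤ √(∑ i ∈ s, ‖a i‖ ^ 2) * √(K / D ^ 2) := by
  rw [norm_mul, norm_inv, Complex.norm_real, Real.norm_eq_abs,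
    Real.sqrt_div' _ (sq_nonneg D), Real.sqrt_sq_eq_abs, ← hy, mul_div_assoc', inv_mul_eq_div]
  exact div_le_div_of_nonneg_right (norm_sum_mul_le_sqrt_mul_sqrt s a y) (abs_nonneg D)

theorem stmt11_general (d : ℕ) (p : ℝ) (hp : ((d : ℝ) - 1) / 2 < p)
    (Dhat : ℕ → ℝ)
    (hgrowth : ∃ C₁ C₂ : ℝ, 0 < C₁ ∧ 0 < C₂ ∧ ∃ n₀ : ℕ, ∀ n : ℕ, n₀ ≤ n →
      C₁ * (n : ℝ) ^ p ≤ |Dhat n| ∧ |Dhat n| ≤ C₂ * (n : ℝ) ^ p)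
    (Nd : ℕ → ℕ)
    (hNd : ∃ C : ℝ, 0 < C ∧ ∀ n : ℕ, 1 ≤ n → (Nd n : ℝ) ≤ C * (n : ℝ) ^ ((d : ℝ) - 2))
    (ad : ℝ) (had : 0 < ad)
    (Y : (n : ℕ) → Fin (Nd n) → (Metric.sphere (0 : EuclideanSpace ℝ (Fin d)) 1) → ℂ)
    (hYcont : ∀ n m, Continuous (Y n m))
    (haddition : ∀ (n : ℕ) (x : Metric.sphere (0 : EuclideanSpace ℝ (Fin d)) 1),
      ∑ m, ‖Y n m x‖ ^ 2 = (Nd n : ℝ) / ad)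
    (fhat : (n : ℕ) → Fin (Nd n) → ℂ)
    (hf : Summable (fun n : ℕ => ∑ m, ‖fhat n m‖ ^ 2)) :
    ∃ g : (Metric.sphere (0 : EuclideanSpace ℝ (Fin d)) 1) → ℂ,
      Continuous g ∧
      TendstoUniformly
        (fun (N : ℕ) (x : Metric.sphere (0 : EuclideanSpace ℝ (Fin d)) 1) =>
          ∑ n ∈ Finset.range N, ((Dhat n : ℂ))⁻¹ * ∑ m, fhat n m * Y n m x)
        g atTop := by
  obtain ⟨C₁, _, hC₁, -, n₀, hDhat⟩ := hgrowth
  obtain ⟨C, -, hNdC⟩ := hNd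
  have hmult : Summable fun n => (Nd n : ℝ) / ad / Dhat n ^ 2 := by
    refine summable_div_sq_of_le_rpow_of_rpow_le_abs (q := d - 2) (p := p) (C := C / ad)
      (by linarith) hC₁ ?_
      ((eventually_ge_atTop n₀).mono fun n hn => (hDhat n hn).1)
    filter_upwards [eventually_ge_atTop 1] with n hn
    refine ⟨by positivity, ?_⟩
    rw [div_mul_eq_mul_div]
    exact div_le_div_of_nonneg_right (hNdC n hn) had.le
  have hbound := fun n x =>
    norm_ofReal_inv_mul_sum_mul_le Finset.univ (Dhat n) (fhat n) (fun m => Y n m x)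
      (haddition n x)
  have hsum := hf.sqrt_mul_sqrt hmult (fun n => by positivity) (fun n => by positivity)
  exact ⟨_, continuous_tsum (fun n => by fun_prop) hsum hbound,
    tendstoUniformly_tsum_nat hsum hbound⟩

/-- Compatibility of square-integrable functions: if `D` has trivial nullspace and
spectral growth order `p > (d-1)/2`, then for every `f ∈ L²(S^{d-1})` (given through
its spherical Fourier coefficients `f̂_n^m`, square-summable), the series
`Σ_n (1/D̂_n) Σ_m f̂_n^m Y_n^m` converges uniformly on the sphere to a continuous
function, i.e. `D⁻¹ f ∈ C(S^{d-1})`. -/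
theorem stmt11 (d : ℕ) (hd : 2 ≤ d) (p : ℝ) (hp : ((d : ℝ) - 1) / 2 < p)
    (Dhat : ℕ → ℝ) (hD0 : ∀ n, Dhat n ≠ 0)
    (hgrowth : ∃ C₁ C₂ : ℝ, 0 < C₁ ∧ 0 < C₂ ∧ ∃ n₀ : ℕ, ∀ n : ℕ, n₀ ≤ n →
      C₁ * (n : ℝ) ^ p ≤ |Dhat n| ∧ |Dhat n| ≤ C₂ * (n : ℝ) ^ p)
    (Nd : ℕ → ℕ)
    (hNd : ∃ C : ℝ, 0 < C ∧ ∀ n : ℕ, 1 ≤ n → (Nd n : ℝ) ≤ C * (n : ℝ) ^ ((d : ℝ) - 2))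
    (ad : ℝ) (had : 0 < ad)
    (Y : (n : ℕ) → Fin (Nd n) → (Metric.sphere (0 : EuclideanSpace ℝ (Fin d)) 1) → ℂ)
    (hYcont : ∀ n m, Continuous (Y n m))
    (haddition : ∀ (n : ℕ) (x : Metric.sphere (0 : EuclideanSpace ℝ (Fin d)) 1),
      ∑ m, ‖Y n m x‖ ^ 2 = (Nd n : ℝ) / ad)
    (fhat : (n : ℕ) → Fin (Nd n) → ℂ)
    (hf : Summable (fun n : ℕ => ∑ m, ‖fhat n m‖ ^ 2)) :
    ∃ g : (Metric.sphere (0 : EuclideanSpace ℝ (Fin d)) 1) → ℂ,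
      Continuous g ∧
      TendstoUniformly
        (fun (N : ℕ) (x : Metric.sphere (0 : EuclideanSpace ℝ (Fin d)) 1) =>
          ∑ n ∈ Finset.range N, ((Dhat n : ℂ))⁻¹ * ∑ m, fhat n m * Y n m x)
        g atTop :=
  stmt11_general d p hp Dhat hgrowth Nd hNd ad had Y hYcont haddition fhat hf
end

section
/- Let D be a positive-definite spline-admissible pseudo-differential operator with spectral growth order p > (d+1)/2, whose zonal Green kernel ψ_D is the reproducing kernel of the Hilbert space H = H_{D^{1/2}}(S^{d-1}) with inner product ⟨h,g⟩_{D^{1/2}} = ⟨D^{1/2}h, D^{1/2}g⟩. If ψ_D satisfies the uniform Lipschitz bound |ψ_D(⟨r,ρ⟩) - ψ_D(⟨s,ρ⟩)| ≤ L_D² ‖r-s‖ for all r,s,ρ ∈ S^{d-1}, then for any knot set Ξ_N ⊂ S^{d-1} with nodal width Θ = max_r min_{s∈Ξ_N} ‖r-s‖, the orthogonal projection s_N of any h ∈ H onto span{ψ_D(⟨·, r_n⟩) : r_n ∈ Ξ_N} satisfies ‖h - s_N‖_∞ ≤ 2^{3/2} L_D √Θ ‖h‖_{D^{1/2}}. 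-/
/-!
Fix `x` and a knot `r` within distance `Θ` of it. Since `h - s_N` is orthogonal to `k r` and to
`s_N`, the error `h(x) - s_N(x) = ⟪k x, h - s_N⟫` equals `⟪k x - k r, h - s_N⟫`, which
Cauchy–Schwarz bounds by `‖k x - k r‖ ‖h‖`. Expanding `‖k x - k r‖²` in kernel values and applying
the Lipschitz bound twice gives `‖k x - k r‖² ≤ 2 L² Θ`.
-/

open RCLike

section InnerProductSpace

variable {𝕜 E : Type*} [RCLike 𝕜] [NormedAddCommGroup E] [InnerProductSpace 𝕜 E]

local notation "⟪" x ", " y "⟫" => inner 𝕜 x y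

theorem norm_sub_le_norm_of_inner_sub_eq_zero {h s : E} (hs : ⟪s, h - s⟫ = 0) :
    ‖h - s‖ ≤ ‖h‖ := by
  have pythagoras := norm_add_sq_eq_norm_sq_add_norm_sq_of_inner_eq_zero s (h - s) hs
  rw [add_sub_cancel] at pythagoras
  rw [mul_self_le_mul_self_iff (norm_nonneg _) (norm_nonneg _), pythagoras]
  exact le_add_of_nonneg_left (mul_self_nonneg _)

theorem norm_inner_sub_inner_le_of_inner_sub_eq_zero {u w h s : E} (hw : ⟪w, h - s⟫ = 0)
    (hs : ⟪s, h - s⟫ = 0) : ‖⟪u, h⟫ - ⟪u, s⟫‖ ≤ ‖u - w‖ * ‖h‖ :=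
  calc ‖⟪u, h⟫ - ⟪u, s⟫‖ = ‖⟪u - w, h - s⟫‖ := by
        rw [inner_sub_left, hw, sub_zero, inner_sub_right]
    _ ≤ ‖u - w‖ * ‖h - s‖ := norm_inner_le_norm _ _
    _ ≤ ‖u - w‖ * ‖h‖ :=
        mul_le_mul_of_nonneg_left (norm_sub_le_norm_of_inner_sub_eq_zero hs) (norm_nonneg _)

theorem sq_norm_sub_le_norm_inner_sub_add (u v : E) :
    ‖u - v‖ ^ 2 ≤ ‖⟪u, u⟫ - ⟪v, u⟫‖ + ‖⟪v, v⟫ - ⟪u, v⟫‖ :=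
  calc ‖u - v‖ ^ 2 = re (⟪u, u⟫ - ⟪v, u⟫ + (⟪v, v⟫ - ⟪u, v⟫)) := by
        rw [← inner_self_eq_norm_sq (𝕜 := 𝕜), inner_sub_sub_self]
        ring_nf
    _ ≤ ‖⟪u, u⟫ - ⟪v, u⟫ + (⟪v, v⟫ - ⟪u, v⟫)‖ := re_le_norm _
    _ ≤ ‖⟪u, u⟫ - ⟪v, u⟫‖ + ‖⟪v, v⟫ - ⟪u, v⟫‖ := norm_add_le _ _

theorem sq_norm_sub_le_of_lipschitz_kernel {X : Type*} [PseudoMetricSpace X] {k : X → E} {C : ℝ}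
    (hLip : ∀ a b ρ, ‖⟪k a, k ρ⟫ - ⟪k b, k ρ⟫‖ ≤ C * dist a b) (a b : X) :
    ‖k a - k b‖ ^ 2 ≤ 2 * C * dist a b :=
  calc ‖k a - k b‖ ^ 2 ≤ ‖⟪k a, k a⟫ - ⟪k b, k a⟫‖ + ‖⟪k b, k b⟫ - ⟪k a, k b⟫‖ :=
        sq_norm_sub_le_norm_inner_sub_add _ _
    _ ≤ C * dist a b + C * dist b a := add_le_add (hLip a b a) (hLip b a b)
    _ = 2 * C * dist a b := by rw [dist_comm]; ring

end InnerProductSpace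

/-- Approximation error of spline interpolation on the sphere.  `H` is the RKHS
`H_{D^{1/2}}(S^{d-1})` with reproducing kernel `K(r,s) = ψ_D(⟨r,s⟩)`, represented by
kernel sections `k : S^{d-1} → H` (so that `h(r) = ⟪k r, h⟫` and
`⟪k r, k s⟫ = ψ_D(⟨r,s⟩)`).  If `ψ_D` satisfies the uniform Lipschitz bound
`|ψ_D(⟨r,ρ⟩) - ψ_D(⟨s,ρ⟩)| ≤ L_D² ‖r - s‖`, and `Ξ_N = {r_1, …, r_N}` is a knot set
with nodal width at most `Θ` (every point of the sphere is within chordal distance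
`Θ` of a knot), then the orthogonal projection `s_N` of `h ∈ H` onto
`span{ψ_D(⟨·, r_n⟩)}` satisfies `‖h - s_N‖_∞ ≤ 2^{3/2} L_D √Θ ‖h‖_{D^{1/2}}`. -/
theorem stmt15 (d : ℕ) (H : Type*) [NormedAddCommGroup H] [InnerProductSpace ℂ H]
    (k : (Metric.sphere (0 : EuclideanSpace ℝ (Fin d)) 1) → H)
    (ψ : ℝ → ℝ) (L : ℝ) (hL : 0 ≤ L)
    (hker : ∀ r s : Metric.sphere (0 : EuclideanSpace ℝ (Fin d)) 1,
      (inner ℂ (k r) (k s) : ℂ)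
        = ((ψ (inner ℝ (r : EuclideanSpace ℝ (Fin d)) (s : EuclideanSpace ℝ (Fin d)) : ℝ) : ℝ) : ℂ))
    (hLip : ∀ r s ρ : Metric.sphere (0 : EuclideanSpace ℝ (Fin d)) 1,
      |ψ (inner ℝ (r : EuclideanSpace ℝ (Fin d)) (ρ : EuclideanSpace ℝ (Fin d)) : ℝ)
        - ψ (inner ℝ (s : EuclideanSpace ℝ (Fin d)) (ρ : EuclideanSpace ℝ (Fin d)) : ℝ)|
        ≤ L ^ 2 * ‖(r : EuclideanSpace ℝ (Fin d)) - (s : EuclideanSpace ℝ (Fin d))‖)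
    (N : ℕ) (rknots : Fin N → Metric.sphere (0 : EuclideanSpace ℝ (Fin d)) 1)
    (Θ : ℝ)
    (hΘ : ∀ x : Metric.sphere (0 : EuclideanSpace ℝ (Fin d)) 1, ∃ n : Fin N,
      ‖(x : EuclideanSpace ℝ (Fin d)) - (rknots n : EuclideanSpace ℝ (Fin d))‖ ≤ Θ)
    (h sN : H)
    (hsN : sN ∈ Submodule.span ℂ (Set.range (fun n => k (rknots n))))
    (horth : ∀ v ∈ Submodule.span ℂ (Set.range (fun n => k (rknots n))),
      (inner ℂ v (h - sN) : ℂ) = 0) :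
    ∀ x : Metric.sphere (0 : EuclideanSpace ℝ (Fin d)) 1,
      ‖(inner ℂ (k x) h : ℂ) - (inner ℂ (k x) sN : ℂ)‖
        ≤ 2 ^ ((3 : ℝ) / 2) * L * Real.sqrt Θ * ‖h‖ := by
  intro x
  obtain ⟨n, hn⟩ := hΘ x
  have hkLip : ∀ a b ρ, ‖inner ℂ (k a) (k ρ) - inner ℂ (k b) (k ρ)‖ ≤ L ^ 2 * dist a b := by
    intro a b ρ
    rw [hker, hker, ← Complex.ofReal_sub, Complex.norm_real, Real.norm_eq_abs,
      Subtype.dist_eq, dist_eq_norm]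
    exact hLip a b ρ
  have hkx : ‖k x - k (rknots n)‖ ≤ Real.sqrt 2 * L * Real.sqrt Θ := by
    rw [← Real.sqrt_sq hL, ← Real.sqrt_mul zero_le_two, ← Real.sqrt_mul (by positivity)]
    refine Real.le_sqrt_of_sq_le ((sq_norm_sub_le_of_lipschitz_kernel hkLip x _).trans ?_)
    rw [Subtype.dist_eq, dist_eq_norm]
    gcongr
  have hsqrt2 : Real.sqrt 2 ≤ 2 ^ ((3 : ℝ) / 2) := by
    rw [Real.sqrt_eq_rpow]
    exact Real.rpow_le_rpow_of_exponent_le one_le_two (by norm_num)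
  calc ‖inner ℂ (k x) h - inner ℂ (k x) sN‖ ≤ ‖k x - k (rknots n)‖ * ‖h‖ :=
        norm_inner_sub_inner_le_of_inner_sub_eq_zero
          (horth _ (Submodule.subset_span ⟨n, rfl⟩)) (horth _ hsN)
    _ ≤ Real.sqrt 2 * L * Real.sqrt Θ * ‖h‖ := by gcongr
    _ ≤ 2 ^ ((3 : ℝ) / 2) * L * Real.sqrt Θ * ‖h‖ := by gcongr
end
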